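/- Let Γ be a totally ordered abelian group. The inclusion map i : K_Γ → 𝓕(H_Γ), sending each element of K_Γ (a singleton or an interval [0,a] in Γ ∪ {0}) to itself viewed as a nonempty subset of H_Γ, is an injective strong morphism of fuzzy rings; hence K_Γ is a sub-fuzzy ring of 𝓕(H_Γ). -/

import Mathlib

open Set

/-! ### Set-level operations induced by a hyperoperation -/

/-- The sum of two subsets with respect to a hyperaddition. -/
def sAddOf {R : Type*} (add : R → R → Set R) (X Y : Set R) : Set R :=
  ⋃ x ∈ X, ⋃ y ∈ Y, add x y

/-- The hypersum of a list of elements (padded with a final `zero`). -/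
def hypersum {R : Type*} (add : R → R → Set R) (zero : R) (l : List R) : Set R :=
  l.foldr (fun a X => sAddOf add {a} X) {zero}

/-- The collection of all finite (nonempty) hypersums of elements. -/
def sumSet {R : Type*} (add : R → R → Set R) : Set (Set R) :=
  {A | ∃ (a : R) (l : List R), A = l.foldr (fun x X => sAddOf add {x} X) ({a} : Set R)}

/-- The nonempty subsets of a type. -/
abbrev NSet (R : Type*) := {A : Set R // A.Nonempty}

/-- Image of a nonempty subset under a map. -/
def NSet.map {R S : Type*} (f : R → S) (A : NSet R) : NSet S := ⟨f '' A.1, A.2.image f⟩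

/-- Elementwise product of nonempty subsets. -/
def nsMul {R : Type*} (mul : R → R → R) (A B : NSet R) : NSet R :=
  ⟨Set.image2 mul A.1 B.1, A.2.image2 B.2⟩

/-! ### Hyperrings and hyperfields -/

/-- The data `(add, mul, zero, one)` forms a hyperring: `(R, add)` is a canonical
hypergroup, `(R, mul)` is a commutative unital monoid, and multiplication
distributes over hyperaddition with `zero` absorbing. -/
structure IsHyperring {R : Type*} (add : R → R → Set R) (mul : R → R → R)
    (zero one : R) : Prop where
  add_nonempty : ∀ a b, (add a b).Nonempty
  add_comm : ∀ a b, add a b = add b a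
  add_zero : ∀ a, add a zero = {a}
  exists_neg : ∀ a, ∃! b, zero ∈ add a b
  add_assoc : ∀ a b c, sAddOf add (add a b) {c} = sAddOf add {a} (add b c)
  reversible : ∀ a b b' c, zero ∈ add b b' → (a ∈ add b c ↔ c ∈ add a b')
  mul_comm : ∀ a b, mul a b = mul b a
  mul_assoc : ∀ a b c, mul (mul a b) c = mul a (mul b c)
  mul_one : ∀ a, mul a one = a
  mul_zero : ∀ a, mul a zero = zero
  distrib : ∀ a b c, mul a '' add b c = add (mul a b) (mul a c)

/-- The data forms a hyperfield: a hyperring in which every nonzero element is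
a multiplicative unit. -/
structure IsHyperfield {R : Type*} (add : R → R → Set R) (mul : R → R → R)
    (zero one : R) extends IsHyperring add mul zero one : Prop where
  one_ne_zero : one ≠ zero
  inv : ∀ a, a ≠ zero → ∃ b, mul a b = one

/-- A (bundled) hyperring structure on `R`. -/
structure Hyperring (R : Type*) where
  add : R → R → Set R
  mul : R → R → R
  zero : R
  one : R
  isHyperring : IsHyperring add mul zero one

/-- The hyperadditive inverse. -/
noncomputable def Hyperring.neg {R : Type*} (H : Hyperring R) (a : R) : R :=
  (H.isHyperring.exists_neg a).exists.choose

/-- A unit of a hyperring. -/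
def Hyperring.IsUnit {R : Type*} (H : Hyperring R) (a : R) : Prop :=
  ∃ b, H.mul a b = H.one

/-- A (bundled) hyperfield structure on `R`. -/
structure Hyperfield (R : Type*) extends Hyperring R where
  one_ne_zero : one ≠ zero
  inv : ∀ a, a ≠ zero → ∃ b, mul a b = one

/-- A homomorphism of hyperrings (with respect to unbundled data):
`f 0 = 0`, `f 1 = 1`, `f(a+b) ⊆ f a + f b` and `f(a×b) = f a × f b`. -/
structure IsHyperringHom {R S : Type*}
    (addR : R → R → Set R) (mulR : R → R → R) (zeroR oneR : R)
    (addS : S → S → Set S) (mulS : S → S → S) (zeroS oneS : S)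
    (f : R → S) : Prop where
  map_zero : f zeroR = zeroS
  map_one : f oneR = oneS
  map_add : ∀ a b, f '' addR a b ⊆ addS (f a) (f b)
  map_mul : ∀ a b, f (mulR a b) = mulS (f a) (f b)

/-- A strict homomorphism of hyperrings: as above, but `f(a+b) = f a + f b`. -/
structure IsStrictHyperringHom {R S : Type*}
    (addR : R → R → Set R) (mulR : R → R → R) (zeroR oneR : R)
    (addS : S → S → Set S) (mulS : S → S → S) (zeroS oneS : S)
    (f : R → S) : Prop where
  map_zero : f zeroR = zeroS
  map_one : f oneR = oneS
  map_add : ∀ a b, f '' addR a b = addS (f a) (f b)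
  map_mul : ∀ a b, f (mulR a b) = mulS (f a) (f b)

/-! ### Fuzzy rings -/

/-- The data of a fuzzy ring: two binary operations, neutral elements,
a distinguished element `eps` and a set `null` of null elements. -/
structure FuzzyData (K : Type*) where
  add : K → K → K
  mul : K → K → K
  zero : K
  one : K
  eps : K
  null : Set K

namespace FuzzyData

/-- Multiplicative units. -/
def IsUnit {K : Type*} (D : FuzzyData K) (a : K) : Prop := ∃ b, D.mul a b = D.one

/-- Sum of a list of elements. -/
def sum {K : Type*} (D : FuzzyData K) (l : List K) : K := l.foldr D.add D.zero

/-- A fuzzy ring is field-like if for each pair of units `a, b` there exists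
`c ∈ K^× ∪ {0}` with `a + b + c` null. -/
def FieldLike {K : Type*} (D : FuzzyData K) : Prop :=
  ∀ a b, D.IsUnit a → D.IsUnit b →
    ∃ c, (D.IsUnit c ∨ c = D.zero) ∧ D.add (D.add a b) c ∈ D.null

end FuzzyData

/-- Dress's fuzzy ring axioms (FR0)–(FR7). -/
structure IsFuzzyRing {K : Type*} (D : FuzzyData K) : Prop where
  add_comm : ∀ a b, D.add a b = D.add b a
  add_assoc : ∀ a b c, D.add (D.add a b) c = D.add a (D.add b c)
  add_zero : ∀ a, D.add a D.zero = a
  mul_comm : ∀ a b, D.mul a b = D.mul b a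
  mul_assoc : ∀ a b c, D.mul (D.mul a b) c = D.mul a (D.mul b c)
  mul_one : ∀ a, D.mul a D.one = a
  zero_mul : ∀ a, D.mul D.zero a = D.zero
  unit_distrib : ∀ a b c, D.IsUnit a → D.mul a (D.add b c) = D.add (D.mul a b) (D.mul a c)
  eps_sq : D.mul D.eps D.eps = D.one
  null_add : ∀ a ∈ D.null, ∀ b ∈ D.null, D.add a b ∈ D.null
  mul_null : ∀ (a : K), ∀ b ∈ D.null, D.mul a b ∈ D.null
  zero_mem_null : D.zero ∈ D.null
  one_not_mem_null : D.one ∉ D.null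
  fr5 : ∀ a, D.IsUnit a → (D.add D.one a ∈ D.null ↔ a = D.eps)
  fr6 : ∀ a b c d, D.add a b ∈ D.null → D.add c d ∈ D.null →
    D.add (D.mul a c) (D.mul D.eps (D.mul b d)) ∈ D.null
  fr7 : ∀ a b c d, D.add a (D.mul b (D.add c d)) ∈ D.null →
    D.add (D.add a (D.mul b c)) (D.mul b d) ∈ D.null

/-- A weak morphism of fuzzy rings: a map inducing a group homomorphism on units
which preserves null sums of units. -/
structure IsWeakMorphism {K L : Type*} (D : FuzzyData K) (E : FuzzyData L)
    (f : K → L) : Prop where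
  map_unit : ∀ a, D.IsUnit a → E.IsUnit (f a)
  map_one : f D.one = E.one
  map_mul : ∀ a b, D.IsUnit a → D.IsUnit b → f (D.mul a b) = E.mul (f a) (f b)
  map_null : ∀ l : List K, (∀ a ∈ l, D.IsUnit a) →
    D.sum l ∈ D.null → E.sum (l.map f) ∈ E.null

/-- A strong morphism of fuzzy rings. -/
structure IsStrongMorphism {K L : Type*} (D : FuzzyData K) (E : FuzzyData L)
    (f : K → L) : Prop where
  map_one : f D.one = E.one
  map_zero : f D.zero = E.zero
  map_mul : ∀ a b, D.IsUnit a → f (D.mul a b) = E.mul (f a) (f b)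
  map_null : ∀ l : List (K × K),
    D.sum (l.map fun p => D.mul p.1 p.2) ∈ D.null →
    E.sum (l.map fun p => E.mul (f p.1) (f p.2)) ∈ E.null

/-! ### The functor 𝓕 from hyperrings to fuzzy rings -/

/-- The fuzzy-ring data `𝓕(R)` associated to a hyperring `R`: the nonempty
subsets of `R` with subset addition and multiplication, `ε = {-1}`, and null
elements the subsets containing `0`. -/
noncomputable def Hyperring.Fuzzy {R : Type*} (H : Hyperring R) : FuzzyData (NSet R) where
  add A B := ⟨sAddOf H.add A.1 B.1, by
    obtain ⟨a, ha⟩ := A.2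
    obtain ⟨b, hb⟩ := B.2
    obtain ⟨c, hc⟩ := H.isHyperring.add_nonempty a b
    exact ⟨c, Set.mem_biUnion ha (Set.mem_biUnion hb hc)⟩⟩
  mul A B := nsMul H.mul A B
  zero := ⟨{H.zero}, Set.singleton_nonempty _⟩
  one := ⟨{H.one}, Set.singleton_nonempty _⟩
  eps := ⟨{H.neg H.one}, Set.singleton_nonempty _⟩
  null := {A | H.zero ∈ A.1}

/-! ### The functor 𝒢 from field-like fuzzy rings to hyperfields -/

/-- The carrier `K^× ∪ {0}` of `𝒢(K)`. -/
def GCarrier {K : Type*} (D : FuzzyData K) := {a : K // D.IsUnit a ∨ a = D.zero}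

/-- The hyperaddition of `𝒢(K)`: `a ⊕ b = {c : a + b + ε c ∈ K₀}`. -/
def Gadd {K : Type*} (D : FuzzyData K) (a b : GCarrier D) : Set (GCarrier D) :=
  {c | D.add (D.add a.1 b.1) (D.mul D.eps c.1) ∈ D.null}

/-- The zero element of `𝒢(K)`. -/
def Gzero {K : Type*} (D : FuzzyData K) : GCarrier D := ⟨D.zero, Or.inr rfl⟩

/-- The one element of `𝒢(K)`. -/
def Gone {K : Type*} {D : FuzzyData K} (h : IsFuzzyRing D) : GCarrier D :=
  ⟨D.one, Or.inl ⟨D.one, h.mul_one D.one⟩⟩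

/-- The multiplication of `𝒢(K)`. -/
def Gmul {K : Type*} {D : FuzzyData K} (h : IsFuzzyRing D) (a b : GCarrier D) :
    GCarrier D :=
  ⟨D.mul a.1 b.1, by
    rcases b.2 with hb | hb
    · rcases a.2 with ha | ha
      · left
        obtain ⟨a', ha'⟩ := ha
        obtain ⟨b', hb'⟩ := hb
        refine ⟨D.mul a' b', ?_⟩
        rw [h.mul_assoc a.1 b.1 (D.mul a' b'), ← h.mul_assoc b.1 a' b',
          h.mul_comm b.1 a', h.mul_assoc a' b.1 b', hb', h.mul_one, ha']
      · right; rw [ha, h.zero_mul]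
    · right; rw [hb, h.mul_comm, h.zero_mul]⟩

open Classical in
/-- The extension of a weak morphism to `𝒢(K) → 𝒢(L)`, sending `0` to `0`. -/
noncomputable def Gmap {K L : Type*} {D : FuzzyData K} {E : FuzzyData L} {f : K → L}
    (hf : IsWeakMorphism D E f) (a : GCarrier D) : GCarrier E :=
  if h : a.1 = D.zero then Gzero E
  else ⟨f a.1, Or.inl (hf.map_unit a.1 (a.2.resolve_right h))⟩

/-- The canonical map `F → 𝒢(𝓕(F))`, `x ↦ {x}`, for a hyperfield `F`. -/
noncomputable def toG {R : Type*} (F : Hyperfield R) (x : R) :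
    GCarrier F.toHyperring.Fuzzy :=
  ⟨⟨{x}, Set.singleton_nonempty x⟩, by
    by_cases hx : x = F.toHyperring.zero
    · exact Or.inr (by subst hx; rfl)
    · obtain ⟨y, hy⟩ := F.inv x hx
      exact Or.inl ⟨⟨{y}, Set.singleton_nonempty y⟩, by
        apply Subtype.ext
        show Set.image2 F.toHyperring.mul {x} {y} = {F.toHyperring.one}
        rw [Set.image2_singleton, hy]⟩⟩

/-! ### Doubly-distributive hyperfields -/

/-- A hyperfield is doubly-distributive if `(a+b)(c+d) = ac + ad + bc + bd`. -/
def Hyperfield.DoublyDistributive {R : Type*} (F : Hyperfield R) : Prop :=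
  ∀ a b c d : R,
    Set.image2 F.mul (F.add a b) (F.add c d) =
      sAddOf F.add (sAddOf F.add (F.add (F.mul a c) (F.mul a d)) {F.mul b c})
        {F.mul b d}

/-! ### The tropical hyperfield of a totally ordered abelian group, and K_Γ -/

/-- The hyperaddition of the hyperfield `H_Γ` on `Γ ∪ {0}`. -/
def tropAdd (Γ : Type*) [CommGroup Γ] [LinearOrder Γ] [IsOrderedMonoid Γ] (x y : WithZero Γ) :
    Set (WithZero Γ) :=
  if x = y then Set.Iic x else {max x y}

/-- The underlying set of the fuzzy ring `K_Γ`: all singletons and all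
intervals `[0, a]` in `Γ ∪ {0}`. -/
def KgSet (Γ : Type*) [CommGroup Γ] [LinearOrder Γ] [IsOrderedMonoid Γ] : Set (Set (WithZero Γ)) :=
  {A | (∃ a : WithZero Γ, A = {a}) ∨ ∃ a : WithZero Γ, A = Set.Iic a}

open Classical in
/-- The casewise addition of `K_Γ`. -/
noncomputable def KgAdd (Γ : Type*) [CommGroup Γ] [LinearOrder Γ] [IsOrderedMonoid Γ]
    (A B : Set (WithZero Γ)) : Set (WithZero Γ) :=
  if h : ∃ a b : WithZero Γ, A = {a} ∧ B = {b} then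
    if h.choose = h.choose_spec.choose then Set.Iic h.choose
    else {max h.choose h.choose_spec.choose}
  else if h : ∃ a b : WithZero Γ, A = {a} ∧ B = Set.Iic b then
    if h.choose ≤ h.choose_spec.choose then Set.Iic h.choose_spec.choose
    else {h.choose}
  else if h : ∃ a b : WithZero Γ, A = Set.Iic a ∧ B = {b} then
    if h.choose_spec.choose ≤ h.choose then Set.Iic h.choose
    else {h.choose_spec.choose}
  else if h : ∃ a b : WithZero Γ, A = Set.Iic a ∧ B = Set.Iic b then
    Set.Iic (max h.choose h.choose_spec.choose)
  else ∅

/-- The carrier of `K_Γ` as a subtype. -/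
def Kg (Γ : Type*) [CommGroup Γ] [LinearOrder Γ] [IsOrderedMonoid Γ] := {A : Set (WithZero Γ) // A ∈ KgSet Γ}

/-- The inclusion `K_Γ → 𝓕(H_Γ)`. -/
noncomputable def KgToF (Γ : Type*) [CommGroup Γ] [LinearOrder Γ] [IsOrderedMonoid Γ] (A : Kg Γ) : NSet (WithZero Γ) :=
  ⟨A.1, by
    rcases A.2 with ⟨a, h⟩ | ⟨a, h⟩
    · rw [h]; exact Set.singleton_nonempty a
    · rw [h]; exact ⟨a, Set.mem_Iic.2 le_rfl⟩⟩

/-! ### Grassmann–Plücker functions -/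

/-- A Grassmann–Plücker function of rank `r+1` on `E` with coefficients in a
hyperfield `F`. -/
noncomputable def IsGPHyper {R E : Type*} [Fintype E] (F : Hyperfield R) (r : ℕ)
    (φ : (Fin (r + 1) → E) → R) : Prop :=
  (∃ x, φ x ≠ F.zero) ∧
  (∀ x : Fin (r + 1) → E, ∀ i j : Fin (r + 1), i ≠ j → x i = x j → φ x = F.zero) ∧
  (∀ (x : Fin (r + 1) → E) (σ : Equiv.Perm (Fin (r + 1))), Equiv.Perm.sign σ = -1 →
    φ (x ∘ σ) = F.toHyperring.neg (φ x)) ∧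
  (∀ (x : Fin (r + 2) → E) (y : Fin r → E),
    F.zero ∈ hypersum F.add F.zero
      ((List.finRange (r + 2)).map fun (k : Fin (r + 2)) =>
        if Even (k : ℕ)
        then F.toHyperring.neg (F.mul (φ (x ∘ k.succAbove)) (φ (Fin.cons (x k) y)))
        else F.mul (φ (x ∘ k.succAbove)) (φ (Fin.cons (x k) y))))

/-- A Grassmann–Plücker function of rank `r+1` on `E` with coefficients in a
fuzzy ring (given by its data `D`). -/
def IsGPFuzzy {K E : Type*} [Fintype E] (D : FuzzyData K) (r : ℕ)
    (φ : (Fin (r + 1) → E) → K) : Prop :=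
  (∀ x, D.IsUnit (φ x) ∨ φ x = D.zero) ∧
  (∃ x, φ x ≠ D.zero) ∧
  (∀ x : Fin (r + 1) → E, ∀ i j : Fin (r + 1), i ≠ j → x i = x j → φ x = D.zero) ∧
  (∀ (x : Fin (r + 1) → E) (σ : Equiv.Perm (Fin (r + 1))), Equiv.Perm.sign σ = -1 →
    φ (x ∘ σ) = D.mul D.eps (φ x)) ∧
  (∀ (x : Fin (r + 2) → E) (y : Fin r → E),
    D.sum ((List.finRange (r + 2)).map fun (k : Fin (r + 2)) =>
      if Even (k : ℕ)
      then D.mul D.eps (D.mul (φ (x ∘ k.succAbove)) (φ (Fin.cons (x k) y)))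
      else D.mul (φ (x ∘ k.succAbove)) (φ (Fin.cons (x k) y))) ∈ D.null)

/-! The subset sum `A ⊕ B` in `H_Γ` of two singletons or intervals `[0, c]` is again one of
these: in `{a} ⊕ [0, b]` the only summand producing elements below `a` is `a ⊕ a = [0, a]`,
available exactly when `a ≤ b`. Products of such sets are again of this form, since multiplication
by a nonzero element is an order automorphism of `Γ ∪ {0}`. So the casewise addition of `K_Γ` is
the restriction of the subset addition of `𝓕(H_Γ)`, and iterated sums of products agree in the
two fuzzy rings. -/

section sAddOf

variable {R : Type*} {add : R → R → Set R}

lemma mem_sAddOf {X Y : Set R} {z : R} :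
    z ∈ sAddOf add X Y ↔ ∃ x ∈ X, ∃ y ∈ Y, z ∈ add x y := by
  simp [sAddOf]

lemma sAddOf_singleton_singleton (a b : R) : sAddOf add {a} {b} = add a b := by
  simp [sAddOf]

lemma sAddOf_comm (hadd : ∀ x y, add x y = add y x) (X Y : Set R) :
    sAddOf add X Y = sAddOf add Y X := by
  ext z
  simp only [mem_sAddOf]
  constructor <;> exact fun ⟨x, hx, y, hy, hz⟩ => ⟨y, hy, x, hx, hadd x y ▸ hz⟩

end sAddOf

section GroupWithZero

variable {M : Type*} [LinearOrderedCommGroupWithZero M]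

lemma image_mul_left_Iic₀ (a b : M) : (a * ·) '' Iic b = Iic (a * b) := by
  rcases eq_or_ne a 0 with rfl | ha
  · have hb : (Iic b).Nonempty := ⟨b, le_rfl⟩
    simp only [zero_mul, hb.image_const]
    ext
    simp
  · exact image_mul_left_Iic (zero_lt_iff.2 ha) b

lemma image2_mul_singleton_Iic (a b : M) : image2 (· * ·) {a} (Iic b) = Iic (a * b) := by
  rw [image2_singleton_left, image_mul_left_Iic₀]

lemma image2_mul_Iic_singleton (a b : M) : image2 (· * ·) (Iic a) {b} = Iic (a * b) := by
  rw [image2_swap, image2_singleton_left]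
  simp only [mul_comm _ b]
  exact image_mul_left_Iic₀ b a

lemma image2_mul_Iic_Iic (a b : M) : image2 (· * ·) (Iic a) (Iic b) = Iic (a * b) := by
  refine subset_antisymm ?_ ?_
  · rintro _ ⟨x, hx, y, hy, rfl⟩
    exact mul_le_mul' hx hy
  · rw [← image2_mul_singleton_Iic]
    exact image2_subset_right (singleton_subset_iff.2 (mem_Iic.2 le_rfl))

end GroupWithZero

section KGamma

variable {Γ : Type*} [CommGroup Γ] [LinearOrder Γ] [IsOrderedMonoid Γ]

lemma tropAdd_self (x : WithZero Γ) : tropAdd Γ x x = Iic x := if_pos rfl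

lemma tropAdd_of_ne {x y : WithZero Γ} (h : x ≠ y) : tropAdd Γ x y = {max x y} := if_neg h

lemma tropAdd_comm (x y : WithZero Γ) : tropAdd Γ x y = tropAdd Γ y x := by
  rcases eq_or_ne x y with rfl | h
  · rfl
  · rw [tropAdd_of_ne h, tropAdd_of_ne h.symm, max_comm]

lemma max_mem_tropAdd (x y : WithZero Γ) : max x y ∈ tropAdd Γ x y := by
  rcases eq_or_ne x y with rfl | h
  · simp [tropAdd_self]
  · simp [tropAdd_of_ne h]

lemma le_max_of_mem_tropAdd {x y z : WithZero Γ} (hz : z ∈ tropAdd Γ x y) : z ≤ max x y := by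
  rcases eq_or_ne x y with rfl | h
  · simpa [tropAdd_self] using hz
  · simp_all [tropAdd_of_ne h]

lemma sAddOf_tropAdd_singleton_Iic (a b : WithZero Γ) :
    sAddOf (tropAdd Γ) {a} (Iic b) = if a ≤ b then Iic b else {a} := by
  ext z
  simp only [mem_sAddOf, mem_singleton_iff, mem_Iic, exists_eq_left]
  split_ifs with hab
  · refine ⟨fun ⟨y, hy, hz⟩ => (le_max_of_mem_tropAdd hz).trans (max_le hab hy), fun hz => ?_⟩
    rcases le_total z a with hza | haz
    · exact ⟨a, hab, by simpa [tropAdd_self] using hza⟩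
    · exact ⟨z, hz, by simpa [max_eq_right haz] using max_mem_tropAdd a z⟩
  · have hba : b < a := not_le.1 hab
    refine ⟨fun ⟨y, hy, hz⟩ => ?_, fun hz => ⟨b, le_rfl, ?_⟩⟩
    · have hya : y < a := hy.trans_lt hba
      simpa [tropAdd_of_ne hya.ne', max_eq_left hya.le] using hz
    · rw [hz]
      simpa [max_eq_left hba.le] using max_mem_tropAdd a b

lemma sAddOf_tropAdd_Iic_singleton (a b : WithZero Γ) :
    sAddOf (tropAdd Γ) (Iic a) {b} = if b ≤ a then Iic a else {b} := by
  rw [sAddOf_comm tropAdd_comm, sAddOf_tropAdd_singleton_Iic]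

lemma sAddOf_tropAdd_Iic_Iic (a b : WithZero Γ) :
    sAddOf (tropAdd Γ) (Iic a) (Iic b) = Iic (max a b) := by
  ext z
  simp only [mem_sAddOf, mem_Iic]
  refine ⟨fun ⟨x, hx, y, hy, hz⟩ => (le_max_of_mem_tropAdd hz).trans (max_le_max hx hy),
    fun hz => ?_⟩
  by_cases hza : z ≤ a
  · by_cases hzb : z ≤ b
    · exact ⟨z, hza, z, hzb, by simp [tropAdd_self]⟩
    · have hzb' : b ≤ z := (not_le.1 hzb).le
      exact ⟨z, hza, b, le_rfl, by simpa [max_eq_left hzb'] using max_mem_tropAdd z b⟩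
  · have haz : a ≤ z := (not_le.1 hza).le
    have hzb : z ≤ b := by simpa [max_eq_right_iff, hza] using hz
    exact ⟨a, le_rfl, z, hzb, by simpa [max_eq_right haz] using max_mem_tropAdd a z⟩

lemma image2_mul_mem_KgSet {A B : Set (WithZero Γ)} (hA : A ∈ KgSet Γ) (hB : B ∈ KgSet Γ) :
    image2 (· * ·) A B ∈ KgSet Γ := by
  rcases hA with ⟨a, rfl⟩ | ⟨a, rfl⟩ <;> rcases hB with ⟨b, rfl⟩ | ⟨b, rfl⟩
  · exact Or.inl ⟨a * b, image2_singleton⟩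
  · exact Or.inr ⟨a * b, image2_mul_singleton_Iic a b⟩
  · exact Or.inr ⟨a * b, image2_mul_Iic_singleton a b⟩
  · exact Or.inr ⟨a * b, image2_mul_Iic_Iic a b⟩

lemma sAddOf_tropAdd_mem_KgSet {A B : Set (WithZero Γ)} (hA : A ∈ KgSet Γ)
    (hB : B ∈ KgSet Γ) : sAddOf (tropAdd Γ) A B ∈ KgSet Γ := by
  rcases hA with ⟨a, rfl⟩ | ⟨a, rfl⟩ <;> rcases hB with ⟨b, rfl⟩ | ⟨b, rfl⟩
  · rw [sAddOf_singleton_singleton]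
    rcases eq_or_ne a b with rfl | h
    · exact Or.inr ⟨a, tropAdd_self a⟩
    · exact Or.inl ⟨max a b, tropAdd_of_ne h⟩
  · rw [sAddOf_tropAdd_singleton_Iic]
    split_ifs
    exacts [Or.inr ⟨b, rfl⟩, Or.inl ⟨a, rfl⟩]
  · rw [sAddOf_tropAdd_Iic_singleton]
    split_ifs
    exacts [Or.inr ⟨a, rfl⟩, Or.inl ⟨b, rfl⟩]
  · rw [sAddOf_tropAdd_Iic_Iic]
    exact Or.inr ⟨max a b, rfl⟩

lemma KgAdd_eq_sAddOf {A B : Set (WithZero Γ)} (hA : A ∈ KgSet Γ) (hB : B ∈ KgSet Γ) :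
    KgAdd Γ A B = sAddOf (tropAdd Γ) A B := by
  -- `KgAdd` picks its witnesses by choice, depending on `A` and `B`, so these cannot be rewritten
  have of_shape {f g : WithZero Γ → Set (WithZero Γ)} (h : ∃ a b, A = f a ∧ B = g b) :
      sAddOf (tropAdd Γ) A B = sAddOf (tropAdd Γ) (f h.choose) (g h.choose_spec.choose) :=
    congrArg₂ _ h.choose_spec.choose_spec.1 h.choose_spec.choose_spec.2
  unfold KgAdd
  by_cases h₁ : ∃ a b : WithZero Γ, A = {a} ∧ B = {b}
  · rw [dif_pos h₁, of_shape h₁, sAddOf_singleton_singleton, tropAdd]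
  by_cases h₂ : ∃ a b : WithZero Γ, A = {a} ∧ B = Iic b
  · rw [dif_neg h₁, dif_pos h₂, of_shape h₂]
    exact (sAddOf_tropAdd_singleton_Iic _ _).symm
  by_cases h₃ : ∃ a b : WithZero Γ, A = Iic a ∧ B = {b}
  · rw [dif_neg h₁, dif_neg h₂, dif_pos h₃, of_shape h₃]
    exact (sAddOf_tropAdd_Iic_singleton _ _).symm
  have h₄ : ∃ a b : WithZero Γ, A = Iic a ∧ B = Iic b := by
    rcases hA with ⟨a, rfl⟩ | ⟨a, rfl⟩ <;> rcases hB with ⟨b, rfl⟩ | ⟨b, rfl⟩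
    exacts [(h₁ ⟨a, b, rfl, rfl⟩).elim, (h₂ ⟨a, b, rfl, rfl⟩).elim,
      (h₃ ⟨a, b, rfl, rfl⟩).elim, ⟨a, b, rfl, rfl⟩]
  rw [dif_neg h₁, dif_neg h₂, dif_neg h₃, dif_pos h₄, of_shape h₄, sAddOf_tropAdd_Iic_Iic]

lemma foldr_KgAdd_eq_foldr_sAddOf {l : List (Set (WithZero Γ))} (hl : ∀ A ∈ l, A ∈ KgSet Γ) :
    l.foldr (KgAdd Γ) {0} = l.foldr (sAddOf (tropAdd Γ)) {0} ∧
      l.foldr (sAddOf (tropAdd Γ)) {0} ∈ KgSet Γ := by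
  induction l with
  | nil => exact ⟨rfl, Or.inl ⟨0, rfl⟩⟩
  | cons A l ih =>
    obtain ⟨heq, hmem⟩ := ih fun B hB => hl B (List.mem_cons_of_mem A hB)
    have hA := hl A List.mem_cons_self
    simp only [List.foldr_cons, heq]
    exact ⟨KgAdd_eq_sAddOf hA hmem, sAddOf_tropAdd_mem_KgSet hA hmem⟩

end KGamma

/-- For a totally ordered abelian group `Γ`, the inclusion
`i : K_Γ → 𝓕(H_Γ)` is an injective strong morphism of fuzzy rings: the carrier of
`K_Γ` (singletons and intervals `[0,a]`) is closed under the `K_Γ`-operations, the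
`K_Γ`-addition agrees with the subset addition of `𝓕(H_Γ)`, the inclusion is
injective, preserves `0` and `1`, and carries null sums of products to null sums of
products; hence `K_Γ` is a sub-fuzzy ring of `𝓕(H_Γ)`. -/
theorem KGamma_sub_fuzzyRing (Γ : Type*) [CommGroup Γ] [LinearOrder Γ] [IsOrderedMonoid Γ] :
    (∀ A ∈ KgSet Γ, ∀ B ∈ KgSet Γ,
      KgAdd Γ A B ∈ KgSet Γ ∧ Set.image2 (· * ·) A B ∈ KgSet Γ) ∧
    (∀ A ∈ KgSet Γ, ∀ B ∈ KgSet Γ, KgAdd Γ A B = sAddOf (tropAdd Γ) A B) ∧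
    Function.Injective (KgToF Γ) ∧
    (KgToF Γ ⟨{(1 : WithZero Γ)}, Or.inl ⟨1, rfl⟩⟩).1 = {(1 : WithZero Γ)} ∧
    (KgToF Γ ⟨{(0 : WithZero Γ)}, Or.inl ⟨0, rfl⟩⟩).1 = {(0 : WithZero Γ)} ∧
    (∀ l : List (Kg Γ × Kg Γ),
      (0 : WithZero Γ) ∈
        l.foldr (fun p X => KgAdd Γ (Set.image2 (· * ·) p.1.1 p.2.1) X)
          {(0 : WithZero Γ)} →
      (0 : WithZero Γ) ∈
        l.foldr (fun p X => sAddOf (tropAdd Γ) (Set.image2 (· * ·) p.1.1 p.2.1) X)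
          {(0 : WithZero Γ)}) := by
  refine ⟨fun A hA B hB => ⟨KgAdd_eq_sAddOf hA hB ▸ sAddOf_tropAdd_mem_KgSet hA hB,
      image2_mul_mem_KgSet hA hB⟩,
    fun A hA B hB => KgAdd_eq_sAddOf hA hB,
    fun A B h => Subtype.ext (congrArg Subtype.val h :), rfl, rfl, fun l hl => ?_⟩
  have hprod : ∀ A ∈ l.map (fun p : Kg Γ × Kg Γ => image2 (· * ·) p.1.1 p.2.1), A ∈ KgSet Γ :=
    List.forall_mem_map.2 fun p _ => image2_mul_mem_KgSet p.1.2 p.2.2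
  have hfold := (foldr_KgAdd_eq_foldr_sAddOf hprod).1
  rw [List.foldr_map, List.foldr_map] at hfold
  exact hfold ▸ hl
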